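/- Gauge invariance of the single-scattering kernel: Let n ≥ 2, R > 0, let a : ℝⁿ × S^{n-1} → ℝ be bounded measurable, let k : ℝⁿ × S^{n-1} × S^{n-1} → ℝ, and let φ : ℝⁿ × S^{n-1} → (0,∞) be such that for every (x,θ) the function s ↦ log φ(x+sθ,θ) is continuously differentiable on ℝ, with derivative at s denoted D(x+sθ,θ), and such that φ(x,θ) = 1 whenever |x| = R. Set a'(y,ω) := a(y,ω) − D(y,ω) and k'(y,θ',θ) := (φ(y,θ)/φ(y,θ')) k(y,θ',θ). Define, for |x'| = R, ⟨x',θ'⟩ ≤ 0, 0 ≤ t ≤ τ₊(x',θ'), and θ ∈ S^{n-1}, F_a(t,x',θ',θ) := exp(−∫₀^{τ₊(x'+tθ', θ)} a(x'+tθ'+sθ, θ) ds) · exp(−∫₀^{t} a(x'+sθ', θ') ds), and F_{a'} analogously. Then F_{a'}(t,x',θ',θ) · k'(x'+tθ', θ', θ) = F_a(t,x',θ',θ) · k(x'+tθ', θ', θ). -/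

import Mathlib

/-!
Along each leg of the broken ray, replacing `a` by `a - D` multiplies the attenuation
`exp (-∫ a)` by `exp (∫ D)`, and `∫ D` is the increment of `log φ` over the leg (fundamental
theorem of calculus). Since `φ = 1` on the sphere, the incoming leg `x' → y = x' + tθ'`
contributes `φ (y, θ')` and the outgoing leg from `y` to the exit point contributes
`1 / φ (y, θ)`; the factor `φ (y, θ) / φ (y, θ')` in `k'` cancels both.
-/

/-- Forward exit time of the ball of radius `R`. -/
noncomputable def tauP {n : ℕ} (R : ℝ) (x θ : EuclideanSpace ℝ (Fin n)) : ℝ :=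
  -(inner ℝ x θ : ℝ) + Real.sqrt (R ^ 2 - ‖x‖ ^ 2 + (inner ℝ x θ : ℝ) ^ 2)

/-- The single-scattering attenuation factor along the broken path entering at
`x'` in direction `θ'`, scattering at `x' + tθ'` into direction `θ`. -/
noncomputable def Fatt {n : ℕ} (R : ℝ)
    (a : EuclideanSpace ℝ (Fin n) → EuclideanSpace ℝ (Fin n) → ℝ)
    (t : ℝ) (x' θ' θ : EuclideanSpace ℝ (Fin n)) : ℝ :=
  Real.exp (-(∫ s in (0 : ℝ)..(tauP R (x' + t • θ') θ), a (x' + t • θ' + s • θ) θ)) *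
    Real.exp (-(∫ s in (0 : ℝ)..t, a (x' + s • θ') θ'))

open Real MeasureTheory

lemma norm_add_smul_sq_of_norm_eq_one {F : Type*} [NormedAddCommGroup F] [InnerProductSpace ℝ F]
    {x θ : F} (hθ : ‖θ‖ = 1) (t : ℝ) :
    ‖x + t • θ‖ ^ 2 = ‖x‖ ^ 2 + 2 * t * inner ℝ x θ + t ^ 2 := by
  rw [norm_add_sq_real, real_inner_smul_right, norm_smul, hθ, Real.norm_eq_abs, mul_one, sq_abs]
  ring

section Geometry

variable {n : ℕ} {R : ℝ} {x θ : EuclideanSpace ℝ (Fin n)}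

lemma norm_add_tauP_smul (hR : 0 ≤ R) (hθ : ‖θ‖ = 1) (hx : ‖x‖ ≤ R) :
    ‖x + tauP R x θ • θ‖ = R := by
  have hdisc : 0 ≤ R ^ 2 - ‖x‖ ^ 2 + inner ℝ x θ ^ 2 := by
    nlinarith [norm_nonneg x, sq_nonneg (inner ℝ x θ)]
  have hroot := Real.sq_sqrt hdisc
  rw [← sq_eq_sq₀ (norm_nonneg _) hR, norm_add_smul_sq_of_norm_eq_one hθ, tauP]
  nlinarith

lemma tauP_of_norm_eq (hx : ‖x‖ = R) (hin : inner ℝ x θ ≤ 0) :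
    tauP R x θ = -2 * inner ℝ x θ := by
  rw [tauP, hx, sub_self, zero_add, Real.sqrt_sq_eq_abs, abs_of_nonpos hin]
  ring

lemma norm_add_smul_le_of_le_tauP (hR : 0 ≤ R) (hθ : ‖θ‖ = 1) (hx : ‖x‖ = R)
    (hin : inner ℝ x θ ≤ 0) {t : ℝ} (ht₀ : 0 ≤ t) (ht : t ≤ tauP R x θ) :
    ‖x + t • θ‖ ≤ R := by
  rw [tauP_of_norm_eq hx hin] at ht
  rw [← sq_le_sq₀ (norm_nonneg _) hR, norm_add_smul_sq_of_norm_eq_one hθ, hx]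
  nlinarith

end Geometry

lemma intervalIntegrable_of_norm_le {E : Type*} [NormedAddCommGroup E] {μ : Measure ℝ}
    [IsLocallyFiniteMeasure μ] {f : ℝ → E} (hf : AEStronglyMeasurable f μ) {M : ℝ}
    (hM : ∀ s, ‖f s‖ ≤ M) (u v : ℝ) : IntervalIntegrable f μ u v :=
  IntervalIntegrable.mono_fun' (g := fun _ => M) intervalIntegrable_const hf.restrict
    (Filter.Eventually.of_forall hM)

lemma exp_neg_integral_sub_of_hasDerivAt_log {f d ψ : ℝ → ℝ} {T : ℝ}
    (hf : IntervalIntegrable f volume 0 T)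
    (hd : ∀ s ∈ Set.uIcc 0 T, HasDerivAt (fun u => log (ψ u)) (d s) s)
    (hdi : IntervalIntegrable d volume 0 T) (hψ₀ : 0 < ψ 0) (hψT : 0 < ψ T) :
    exp (-∫ s in 0..T, (f s - d s)) = exp (-∫ s in 0..T, f s) * (ψ T / ψ 0) := by
  rw [intervalIntegral.integral_sub hf hdi, intervalIntegral.integral_eq_sub_of_hasDerivAt hd hdi,
    neg_sub, sub_eq_add_neg, exp_add, exp_sub, exp_log hψ₀, exp_log hψT]
  ring

theorem gauge_invariance_single_scattering_general {n : ℕ} (R : ℝ) (hR : 0 < R)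
    (a : EuclideanSpace ℝ (Fin n) → EuclideanSpace ℝ (Fin n) → ℝ)
    (hameas : Measurable (Function.uncurry a))
    (habd : ∃ M, ∀ y ω, |a y ω| ≤ M)
    (k : EuclideanSpace ℝ (Fin n) → EuclideanSpace ℝ (Fin n) →
      EuclideanSpace ℝ (Fin n) → ℝ)
    (φ D : EuclideanSpace ℝ (Fin n) → EuclideanSpace ℝ (Fin n) → ℝ)
    (hφpos : ∀ x θ, ‖θ‖ = 1 → 0 < φ x θ)
    (hD : ∀ x θ : EuclideanSpace ℝ (Fin n), ‖θ‖ = 1 → ∀ s : ℝ,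
      HasDerivAt (fun u : ℝ => Real.log (φ (x + u • θ) θ)) (D (x + s • θ) θ) s)
    (hDcont : ∀ x θ : EuclideanSpace ℝ (Fin n), ‖θ‖ = 1 →
      Continuous fun s : ℝ => D (x + s • θ) θ)
    (hφ1 : ∀ x θ : EuclideanSpace ℝ (Fin n), ‖x‖ = R → ‖θ‖ = 1 → φ x θ = 1)
    (a' : EuclideanSpace ℝ (Fin n) → EuclideanSpace ℝ (Fin n) → ℝ)
    (ha' : ∀ y ω, a' y ω = a y ω - D y ω)
    (k' : EuclideanSpace ℝ (Fin n) → EuclideanSpace ℝ (Fin n) →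
      EuclideanSpace ℝ (Fin n) → ℝ)
    (hk' : ∀ y θ' θ, k' y θ' θ = (φ y θ / φ y θ') * k y θ' θ) :
    ∀ (x' θ' θ : EuclideanSpace ℝ (Fin n)) (t : ℝ),
      ‖x'‖ = R → ‖θ'‖ = 1 → (inner ℝ x' θ' : ℝ) ≤ 0 →
      0 ≤ t → t ≤ tauP R x' θ' → ‖θ‖ = 1 →
      Fatt R a' t x' θ' θ * k' (x' + t • θ') θ' θ =
        Fatt R a t x' θ' θ * k (x' + t • θ') θ' θ := by
  intro x' θ' θ t hx' hθ' hin ht₀ ht hθ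
  obtain ⟨M, hM⟩ := habd
  have leg : ∀ x ω : EuclideanSpace ℝ (Fin n), ‖ω‖ = 1 → ∀ T,
      exp (-∫ s in 0..T, a' (x + s • ω) ω) =
        exp (-∫ s in 0..T, a (x + s • ω) ω) * (φ (x + T • ω) ω / φ x ω) := by
    intro x ω hω T
    have hline : Measurable fun s : ℝ => a (x + s • ω) ω :=
      hameas.comp (by fun_prop : Measurable fun s : ℝ => (x + s • ω, ω))
    have := exp_neg_integral_sub_of_hasDerivAt_log
      (intervalIntegrable_of_norm_le hline.aestronglyMeasurable (fun s => hM _ _) 0 T)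
      (fun s _ => hD x ω hω s) ((hDcont x ω hω).intervalIntegrable 0 T)
      (hφpos _ _ hω) (hφpos _ _ hω)
    simpa only [ha', zero_smul, add_zero] using this
  have hy : ‖x' + t • θ'‖ ≤ R := norm_add_smul_le_of_le_tauP hR.le hθ' hx' hin ht₀ ht
  have hexit := hφ1 _ _ (norm_add_tauP_smul hR.le hθ hy) hθ
  have hφy := hφpos (x' + t • θ') θ hθ
  have hφy' := hφpos (x' + t • θ') θ' hθ'
  rw [Fatt, Fatt, leg _ _ hθ, leg _ _ hθ', hexit, hφ1 _ _ hx' hθ',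
    hk']
  field_simp

/-- Gauge invariance of the single-scattering kernel. -/
theorem gauge_invariance_single_scattering {n : ℕ} (hn : 2 ≤ n) (R : ℝ) (hR : 0 < R)
    (a : EuclideanSpace ℝ (Fin n) → EuclideanSpace ℝ (Fin n) → ℝ)
    (hameas : Measurable (Function.uncurry a))
    (habd : ∃ M, ∀ y ω, |a y ω| ≤ M)
    (k : EuclideanSpace ℝ (Fin n) → EuclideanSpace ℝ (Fin n) →
      EuclideanSpace ℝ (Fin n) → ℝ)
    (φ D : EuclideanSpace ℝ (Fin n) → EuclideanSpace ℝ (Fin n) → ℝ)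
    (hφpos : ∀ x θ, ‖θ‖ = 1 → 0 < φ x θ)
    (hD : ∀ x θ : EuclideanSpace ℝ (Fin n), ‖θ‖ = 1 → ∀ s : ℝ,
      HasDerivAt (fun u : ℝ => Real.log (φ (x + u • θ) θ)) (D (x + s • θ) θ) s)
    (hDcont : ∀ x θ : EuclideanSpace ℝ (Fin n), ‖θ‖ = 1 →
      Continuous fun s : ℝ => D (x + s • θ) θ)
    (hφ1 : ∀ x θ : EuclideanSpace ℝ (Fin n), ‖x‖ = R → ‖θ‖ = 1 → φ x θ = 1)
    (a' : EuclideanSpace ℝ (Fin n) → EuclideanSpace ℝ (Fin n) → ℝ)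
    (ha' : ∀ y ω, a' y ω = a y ω - D y ω)
    (k' : EuclideanSpace ℝ (Fin n) → EuclideanSpace ℝ (Fin n) →
      EuclideanSpace ℝ (Fin n) → ℝ)
    (hk' : ∀ y θ' θ, k' y θ' θ = (φ y θ / φ y θ') * k y θ' θ) :
    ∀ (x' θ' θ : EuclideanSpace ℝ (Fin n)) (t : ℝ),
      ‖x'‖ = R → ‖θ'‖ = 1 → (inner ℝ x' θ' : ℝ) ≤ 0 →
      0 ≤ t → t ≤ tauP R x' θ' → ‖θ‖ = 1 →
      Fatt R a' t x' θ' θ * k' (x' + t • θ') θ' θ =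
        Fatt R a t x' θ' θ * k (x' + t • θ') θ' θ :=
  gauge_invariance_single_scattering_general R hR a hameas habd k φ D hφpos hD hDcont hφ1 a' ha' k'
    hk'
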